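/- arXiv:1304.6924 — 3 statements merged into one kernel-verified Lean document; each statement's English description precedes it below -/
import Mathlib

section
/- Let Φ̄_G(u) = ∫_u^∞ φ_G(x)dx be the standard Gaussian survival function, let α ∈ (0,1), n ≥ 2, k ∈ {1,…,n} and Δ ∈ (0,1). Define t_{α,k} > 0 by Φ̄_G(t_{α,k}/2) = (k/n)·[1 - √(2·log(4/α)/k)]. If k ≥ 8·log(4/α) and k/n ≥ n^{-Δ}, then t_{α,k} ≤ 2·√(2Δ·log n). -/
open MeasureTheory Filter Set

noncomputable section

/-- The measure on `ℝ` with Lebesgue density `f`. -/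
def pdfMeasure (f : ℝ → ℝ) : Measure ℝ :=
  MeasureTheory.volume.withDensity (fun x => ENNReal.ofReal (f x))

/-- The joint law of `n` i.i.d. observations with common density `f`. -/
def sampleMeasure (n : ℕ) (f : ℝ → ℝ) : Measure (Fin n → ℝ) :=
  Measure.pi (fun _ : Fin n => pdfMeasure f)

/-- The `k`-th order statistic (for `1 ≤ k ≤ n`) of the sample `ω`. -/
def oStat {n : ℕ} (k : ℕ) (ω : Fin n → ℝ) : ℝ :=
  if h : 1 ≤ k ∧ k ≤ n then ω (Tuple.sort ω ⟨k - 1, by omega⟩) else 0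

/-- The spacing `X_{(n-k+1)} - X_{(k)}` of the order statistics. -/
def spacing {n : ℕ} (k : ℕ) (ω : Fin n → ℝ) : ℝ :=
  oStat (n - k + 1) ω - oStat k ω

/-- `K_n = {2^j : 0 ≤ j ≤ ⌊log₂ (n/2)⌋}`. -/
def Kfin (n : ℕ) : Finset ℕ :=
  (Finset.range (Nat.log 2 (n / 2) + 1)).image (fun j => 2 ^ j)

/-- The `(1-u)`-quantile of the spacing `X_{(n-k+1)} - X_{(k)}` under the null
hypothesis (sample of density `φ`; under `H₀` this law does not depend on the
translation parameter). -/
def spacingQuantile (n : ℕ) (φ : ℝ → ℝ) (u : ℝ) (k : ℕ) : ℝ :=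
  sInf {t : ℝ | sampleMeasure n φ {ω | spacing k ω > t} ≤ ENNReal.ofReal u}

/-- The corrected level `α_n`. -/
def alphaN (n : ℕ) (φ : ℝ → ℝ) (α : ℝ) : ℝ :=
  sSup {u : ℝ | u ∈ Set.Ioo (0:ℝ) 1 ∧
    sampleMeasure n φ {ω | ∃ k ∈ Kfin n, spacing k ω > spacingQuantile n φ u k}
      ≤ ENNReal.ofReal α}

/-- The rejection region of the multiple spacing test `Ψ_α`. -/
def psiReject (n : ℕ) (φ : ℝ → ℝ) (α : ℝ) : Set (Fin n → ℝ) :=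
  {ω | ∃ k ∈ Kfin n, spacing k ω > spacingQuantile n φ (alphaN n φ α) k}

/-- The empirical (unbiased) variance `S_n²`. -/
def varStat {n : ℕ} (ω : Fin n → ℝ) : ℝ :=
  (∑ i, (ω i - (∑ j, ω j) / (n : ℝ)) ^ 2) / ((n : ℝ) - 1)

/-- The `(1-α)`-quantile of `S_n²` under the null hypothesis. -/
def varQuantile (n : ℕ) (φ : ℝ → ℝ) (α : ℝ) : ℝ :=
  sInf {t : ℝ | sampleMeasure n φ {ω | varStat ω > t} ≤ ENNReal.ofReal α}

/-- The standard Gaussian density. -/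
def phiG (x : ℝ) : ℝ := (Real.sqrt (2 * Real.pi))⁻¹ * Real.exp (-x ^ 2 / 2)

/-- A two-component Gaussian mixture density. -/
def mixG (ε μ₁ μ₂ : ℝ) : ℝ → ℝ := fun x => (1 - ε) * phiG (x - μ₁) + ε * phiG (x - μ₂)

/-- Survival function `Φ̄ = 1 - Φ` of the density `φ`. -/
def Phibar (φ : ℝ → ℝ) (u : ℝ) : ℝ := 1 - ∫ x in Set.Iic u, φ x

/-- The standard Laplace density. -/
def phiL (x : ℝ) : ℝ := (1 / 2) * Real.exp (-|x|)

/-- A two-component Laplace mixture density. -/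
def mixL (ε μ₁ μ₂ : ℝ) : ℝ → ℝ := fun x => (1 - ε) * phiL (x - μ₁) + ε * phiL (x - μ₂)

/-- The threshold `ρ(k,n) = k/n + (1 + √(1+2kβ))/(nβ)`. -/
def rhoKn (n k : ℕ) (β : ℝ) : ℝ :=
  ((k : ℝ) / (n : ℝ)) + (1 + Real.sqrt (1 + 2 * (k : ℝ) * β)) / ((n : ℝ) * β)

lemma phiG_pos (x : ℝ) : 0 < phiG x := by
  unfold phiG
  positivity

lemma phiG_integrable : Integrable phiG := by
  have h : Integrable (fun x : ℝ => Real.exp (-(1/2) * x ^ 2)) :=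
    integrable_exp_neg_mul_sq (by norm_num)
  have := h.const_mul (Real.sqrt (2 * Real.pi))⁻¹
  refine this.congr ?_
  filter_upwards with x
  unfold phiG
  ring_nf

lemma integral_phiG : ∫ x, phiG x = 1 := by
  unfold phiG
  have h : (fun x : ℝ => (Real.sqrt (2 * Real.pi))⁻¹ * Real.exp (-x ^ 2 / 2))
      = fun x : ℝ => (Real.sqrt (2 * Real.pi))⁻¹ * Real.exp (-(1/2) * x ^ 2) := by
    funext x; ring_nf
  rw [h, integral_const_mul, integral_gaussian]
  have : Real.pi / (1/2) = 2 * Real.pi := by ring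
  rw [this, inv_mul_cancel₀]
  positivity

lemma integral_phiG_Ioi_zero : ∫ x in Ioi (0:ℝ), phiG x = 1/2 := by
  have h := integral_comp_abs (f := phiG)
  have h2 : ∫ x, phiG |x| = ∫ x, phiG x := by
    congr 1; funext x; unfold phiG; rw [sq_abs]
  rw [h2, integral_phiG] at h
  linarith

lemma phiG_int_Ioi (u : ℝ) : IntegrableOn phiG (Ioi u) := phiG_integrable.integrableOn

lemma phiG_strict (a b : ℝ) (h : b < a) :
    ∫ x in Ioi a, phiG x < ∫ x in Ioi b, phiG x := by
  have hsplit : ∫ x in Ioi b, phiG x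
      = (∫ x in Ioc b a, phiG x) + ∫ x in Ioi a, phiG x := by
    rw [← setIntegral_union (Ioc_disjoint_Ioi le_rfl) measurableSet_Ioi
      phiG_integrable.integrableOn (phiG_int_Ioi a), Ioc_union_Ioi_eq_Ioi h.le]
  have hpos : 0 < ∫ x in Ioc b a, phiG x := by
    rw [setIntegral_pos_iff_support_of_nonneg_ae
      (Eventually.of_forall fun x => (phiG_pos x).le) phiG_integrable.integrableOn]
    have : Function.support phiG = univ := by
      ext x; simp [Function.mem_support, (phiG_pos x).ne']
    rw [this, univ_inter]
    simp [Real.volume_Ioc, h]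
  linarith

lemma phiG_shift (u : ℝ) : ∫ x in Ioi u, phiG (x - u) = ∫ x in Ioi (0:ℝ), phiG x := by
  rw [← integral_indicator measurableSet_Ioi, ← integral_indicator measurableSet_Ioi]
  have h : ∀ x, (Ioi u).indicator (fun x => phiG (x - u)) x
      = (Ioi (0:ℝ)).indicator phiG (x - u) := by
    intro x
    by_cases hx : x ∈ Ioi u
    · rw [indicator_of_mem hx, indicator_of_mem (by simpa [sub_pos] using hx)]
    · rw [indicator_of_notMem hx, indicator_of_notMem (by simpa [sub_pos] using hx)]
  simp_rw [h]
  exact integral_sub_right_eq_self ((Ioi (0:ℝ)).indicator phiG) u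

lemma phiG_tail (u : ℝ) (hu : 0 ≤ u) :
    ∫ x in Ioi u, phiG x ≤ Real.exp (-u ^ 2 / 2) * (1/2) := by
  have hint : IntegrableOn (fun x => Real.exp (-u ^ 2 / 2) * phiG (x - u)) (Ioi u) :=
    (((phiG_integrable.comp_sub_right u)).const_mul _).integrableOn
  have hmono : ∫ x in Ioi u, phiG x
      ≤ ∫ x in Ioi u, Real.exp (-u ^ 2 / 2) * phiG (x - u) := by
    refine setIntegral_mono_on (phiG_int_Ioi u) hint measurableSet_Ioi ?_
    intro x hx
    have hx' : u < x := hx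
    unfold phiG
    have hkey : -x ^ 2 / 2 ≤ -u ^ 2 / 2 + -(x - u) ^ 2 / 2 := by nlinarith
    have hexp := Real.exp_le_exp.mpr hkey
    rw [Real.exp_add] at hexp
    have hc : (0:ℝ) < (Real.sqrt (2 * Real.pi))⁻¹ := by positivity
    calc (Real.sqrt (2 * Real.pi))⁻¹ * Real.exp (-x ^ 2 / 2)
        ≤ (Real.sqrt (2 * Real.pi))⁻¹ * (Real.exp (-u ^ 2 / 2) * Real.exp (-(x - u) ^ 2 / 2)) :=
          mul_le_mul_of_nonneg_left hexp hc.le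
      _ = Real.exp (-u ^ 2 / 2) * ((Real.sqrt (2 * Real.pi))⁻¹ * Real.exp (-(x - u) ^ 2 / 2)) := by
          ring
  calc ∫ x in Ioi u, phiG x ≤ ∫ x in Ioi u, Real.exp (-u ^ 2 / 2) * phiG (x - u) := hmono
    _ = Real.exp (-u ^ 2 / 2) * ∫ x in Ioi u, phiG (x - u) := by rw [integral_const_mul]
    _ = Real.exp (-u ^ 2 / 2) * (1/2) := by rw [phiG_shift, integral_phiG_Ioi_zero]

/-- upper bound on the Gaussian threshold `t_{α,k}`
(Lemma `MinBarPhi`). -/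
theorem stmt8 (α : ℝ) (hα : α ∈ Set.Ioo (0:ℝ) 1) (n k : ℕ)
    (hn : 2 ≤ n) (hk1 : 1 ≤ k) (hkn : k ≤ n)
    (Δ : ℝ) (hΔ : Δ ∈ Set.Ioo (0:ℝ) 1)
    (t : ℝ) (ht : 0 < t)
    (hteq : (∫ x in Set.Ioi (t / 2), phiG x)
      = ((k : ℝ) / (n : ℝ)) * (1 - Real.sqrt (2 * Real.log (4 / α) / (k : ℝ))))
    (hk8 : 8 * Real.log (4 / α) ≤ (k : ℝ))
    (hkΔ : (n : ℝ) ^ (-Δ) ≤ (k : ℝ) / (n : ℝ)) :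
    t ≤ 2 * Real.sqrt (2 * Δ * Real.log (n : ℝ)) := by
  obtain ⟨hα0, hα1⟩ := hα
  obtain ⟨hΔ0, hΔ1⟩ := hΔ
  have hL : 0 < Real.log (4 / α) :=
    Real.log_pos ((one_lt_div hα0).mpr (by linarith))
  have hk0 : (0:ℝ) < k := by exact_mod_cast hk1
  have hn1 : (1:ℝ) < n := by exact_mod_cast (by omega : 1 < n)
  have hn0 : (0:ℝ) < n := by linarith
  have hsq : Real.sqrt (2 * Real.log (4 / α) / k) ≤ 1/2 := by
    have h14 : 2 * Real.log (4 / α) / k ≤ 1/4 := by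
      rw [div_le_iff₀ hk0]; nlinarith
    calc Real.sqrt (2 * Real.log (4 / α) / k) ≤ Real.sqrt (1/4) := Real.sqrt_le_sqrt h14
      _ = 1/2 := by
          rw [show (1:ℝ)/4 = (1/2)^2 by norm_num, Real.sqrt_sq (by norm_num)]
  have hlogn : 0 < Real.log n := Real.log_pos hn1
  set s := Real.sqrt (2 * Δ * Real.log n) with hs
  by_contra hcon
  push_neg at hcon
  have hs2 : s < t / 2 := by linarith
  have h1 : ∫ x in Ioi (t/2), phiG x < ∫ x in Ioi s, phiG x := phiG_strict _ _ hs2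
  have h2 : ∫ x in Ioi s, phiG x ≤ Real.exp (-s^2/2) * (1/2) :=
    phiG_tail s (Real.sqrt_nonneg _)
  have hss : s^2 = 2*Δ*Real.log n := Real.sq_sqrt (by positivity)
  have h3 : Real.exp (-s^2/2) = (n:ℝ)^(-Δ) := by
    rw [hss, Real.rpow_def_of_pos hn0]
    congr 1; ring
  have h4 : (n:ℝ)^(-Δ) * (1/2) ≤ ((k:ℝ)/n) * (1 - Real.sqrt (2 * Real.log (4 / α) / k)) := by
    have hkn' : (0:ℝ) ≤ (k:ℝ)/n := by positivity
    calc (n:ℝ)^(-Δ) * (1/2) ≤ ((k:ℝ)/n)*(1/2) :=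
          mul_le_mul_of_nonneg_right hkΔ (by norm_num)
      _ ≤ ((k:ℝ)/n) * (1 - Real.sqrt (2 * Real.log (4 / α) / k)) :=
          mul_le_mul_of_nonneg_left (by linarith) hkn'
  rw [hteq] at h1
  rw [h3] at h2
  linarith
end
end

section
/- Let Y₁,…,Yₙ be i.i.d. with an even continuous density φ on ℝ, with cdf Φ and survival function Φ̄ = 1-Φ. Let α ∈ (0,1) and k ∈ {1,…,⌊n/2⌋} with k > 2·log(4/α), and let t_{α,k} be defined by Φ̄(t_{α,k}/2) = (k/n)·[1 - √(2·log(4/α)/k)]. Then P(Y₍ₙ₋ₖ₊₁₎ - Y₍ₖ₎ > t_{α,k}) ≤ α; consequently the (1-α)-quantile q_{α,k} of the spacing Y₍ₙ₋ₖ₊₁₎ - Y₍ₖ₎ satisfies q_{α,k} ≤ t_{α,k}. -/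
open MeasureTheory Filter Set

noncomputable section

/-!
If the spacing exceeds `t`, then at least `k` observations exceed `t/2` or at least `k` fall
below `-t/2`. By evenness each tail has probability `p = Φ̄(t/2) = (k/n)(1 - η)` with
`η = √(2 log(4/α)/k)`, so both events are binomial upper tails at `k = np/(1 - η)`. Markov's
inequality applied to `r ^ #{i | Yᵢ in the tail}` with `r = (1 - η)⁻¹` bounds each by
`e^{kη} (1 - η)^k ≤ e^{-kη²/2} = α/4`, using `log (1 - η) ≤ -η - η²/2`. Since spacings are
nonnegative and `α < 1`, the set defining the quantile is bounded below, and it contains `t`.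
-/

open scoped Finset

lemma one_sub_le_exp_neg_sub_sq_div_two {x : ℝ} (h0 : 0 ≤ x) (h1 : x < 1) :
    1 - x ≤ Real.exp (-x - x ^ 2 / 2) := by
  have hlog : x + x ^ 2 / 2 ≤ -Real.log (1 - x) := by
    have h := sum_le_hasSum (Finset.range 2) (fun i _ => by positivity)
      (Real.hasSum_pow_div_log_of_abs_lt_one (by rwa [abs_of_nonneg h0]))
    norm_num [Finset.sum_range_succ] at h
    linarith
  calc 1 - x = Real.exp (Real.log (1 - x)) := (Real.exp_log (by linarith)).symm
    _ ≤ Real.exp (-x - x ^ 2 / 2) := Real.exp_le_exp.mpr (by linarith)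

section Chernoff

variable {ι α : Type*} [Fintype ι] [MeasurableSpace α] {μ : Measure α}

lemma pow_mul_measureReal_le_card_filter_mem_le [IsFiniteMeasure μ] {A : Set α}
    [DecidablePred (· ∈ A)] (hA : MeasurableSet A) {r : ℝ} (hr : 1 ≤ r) (k : ℕ) :
    r ^ k * (Measure.pi fun _ : ι => μ).real {ω | k ≤ #(Finset.univ.filter fun i => ω i ∈ A)}
      ≤ (r * μ.real A + μ.real Aᶜ) ^ Fintype.card ι := by
  set g : α → ℝ := A.piecewise (fun _ => r) (fun _ => 1)
  have hg : Integrable g μ :=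
    Integrable.piecewise hA (integrable_const r).integrableOn (integrable_const 1).integrableOn
  have hgint : ∫ x, g x ∂μ = r * μ.real A + μ.real Aᶜ := by
    rw [integral_piecewise hA (integrable_const r).integrableOn (integrable_const 1).integrableOn,
      setIntegral_const, setIntegral_const, smul_eq_mul, smul_eq_mul, mul_one, mul_comm]
  have hprod : ∀ ω : ι → α, ∏ i, g (ω i) = r ^ #(Finset.univ.filter fun i => ω i ∈ A) := by
    intro ω
    simp only [g, Set.piecewise, Finset.prod_ite, Finset.prod_const, one_pow, mul_one]
  have hevent : {ω : ι → α | k ≤ #(Finset.univ.filter fun i => ω i ∈ A)}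
      ⊆ {ω | r ^ k ≤ ∏ i, g (ω i)} := by
    intro ω (hω : k ≤ _)
    exact (pow_le_pow_right₀ hr hω).trans_eq (hprod ω).symm
  calc r ^ k * (Measure.pi fun _ : ι => μ).real {ω | k ≤ #(Finset.univ.filter fun i => ω i ∈ A)}
      ≤ r ^ k * (Measure.pi fun _ : ι => μ).real {ω | r ^ k ≤ ∏ i, g (ω i)} :=
        mul_le_mul_of_nonneg_left (measureReal_mono hevent) (by positivity)
    _ ≤ ∫ ω, ∏ i, g (ω i) ∂(Measure.pi fun _ : ι => μ) := by
        refine mul_meas_ge_le_integral_of_nonneg (Eventually.of_forall fun ω => ?_)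
          (Integrable.fintype_prod fun _ => hg) _
        simp only [Pi.zero_apply, hprod]
        positivity
    _ = _ := by rw [integral_fintype_prod_eq_pow, hgint]

lemma measureReal_le_card_filter_mem_le_exp [IsProbabilityMeasure μ] {A : Set α}
    [DecidablePred (· ∈ A)] (hA : MeasurableSet A) {k : ℕ} {η : ℝ} (hη0 : 0 ≤ η) (hη1 : η < 1)
    (hmean : Fintype.card ι * μ.real A = k * (1 - η)) :
    (Measure.pi fun _ : ι => μ).real {ω | k ≤ #(Finset.univ.filter fun i => ω i ∈ A)}
      ≤ Real.exp (-(k * η ^ 2 / 2)) := by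
  set P := (Measure.pi fun _ : ι => μ).real {ω | k ≤ #(Finset.univ.filter fun i => ω i ∈ A)}
  set q := μ.real A
  have h1η : 0 < 1 - η := by linarith
  have hr : 1 ≤ (1 - η)⁻¹ := one_le_inv₀ h1η |>.mpr (by linarith)
  have hmgf : (1 - η)⁻¹ * q + μ.real Aᶜ ≤ Real.exp (η / (1 - η) * q) := by
    rw [probReal_compl_eq_one_sub hA]
    calc (1 - η)⁻¹ * q + (1 - q) = η / (1 - η) * q + 1 := by field_simp; ring
      _ ≤ Real.exp (η / (1 - η) * q) := Real.add_one_le_exp _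
  have hchernoff : (1 - η)⁻¹ ^ k * P ≤ Real.exp (k * η) :=
    calc (1 - η)⁻¹ ^ k * P ≤ ((1 - η)⁻¹ * q + μ.real Aᶜ) ^ Fintype.card ι :=
          pow_mul_measureReal_le_card_filter_mem_le hA hr k
      _ ≤ Real.exp (η / (1 - η) * q) ^ Fintype.card ι := by gcongr
      _ = Real.exp (k * η) := by
          rw [← Real.exp_nat_mul]
          congr 1
          field_simp
          linear_combination η * hmean
  calc P = (1 - η) ^ k * ((1 - η)⁻¹ ^ k * P) := by
        rw [← mul_assoc, ← mul_pow, mul_inv_cancel₀ h1η.ne', one_pow, one_mul]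
    _ ≤ Real.exp (-η - η ^ 2 / 2) ^ k * Real.exp (k * η) := by
        gcongr
        exact one_sub_le_exp_neg_sub_sq_div_two hη0 hη1
    _ = Real.exp (-(k * η ^ 2 / 2)) := by
        rw [← Real.exp_nat_mul, ← Real.exp_add]
        ring_nf

lemma measureReal_le_card_filter_mem_le_exp_neg [IsProbabilityMeasure μ] {A : Set α}
    [DecidablePred (· ∈ A)] (hA : MeasurableSet A) {k : ℕ} {L : ℝ} (hL : 0 ≤ L) (hLk : 2 * L < k)
    (hmean : Fintype.card ι * μ.real A = k * (1 - Real.sqrt (2 * L / k))) :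
    (Measure.pi fun _ : ι => μ).real {ω | k ≤ #(Finset.univ.filter fun i => ω i ∈ A)}
      ≤ Real.exp (-L) := by
  have hk : (0 : ℝ) < k := by linarith
  have hsq : Real.sqrt (2 * L / k) ^ 2 = 2 * L / k := Real.sq_sqrt (by positivity)
  have hlt : Real.sqrt (2 * L / k) < 1 := by
    rw [Real.sqrt_lt' one_pos, one_pow, div_lt_one hk]
    exact hLk
  convert measureReal_le_card_filter_mem_le_exp hA (Real.sqrt_nonneg _) hlt hmean using 2
  rw [hsq]
  field_simp

end Chernoff

section Density

variable {φ : ℝ → ℝ}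

lemma pdfMeasure_real_apply (hφnn : ∀ x, 0 ≤ φ x) (hφint : Integrable φ) {A : Set ℝ}
    (hA : MeasurableSet A) : (pdfMeasure φ).real A = ∫ x in A, φ x := by
  rw [measureReal_def, pdfMeasure, withDensity_apply _ hA,
    ← ofReal_integral_eq_lintegral_ofReal hφint.restrict (Eventually.of_forall hφnn),
    ENNReal.toReal_ofReal (setIntegral_nonneg hA fun x _ => hφnn x)]

lemma isProbabilityMeasure_pdfMeasure (hφnn : ∀ x, 0 ≤ φ x) (hφint : ∫ x, φ x = 1) :
    IsProbabilityMeasure (pdfMeasure φ) := by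
  refine ⟨?_⟩
  rw [pdfMeasure, withDensity_apply _ MeasurableSet.univ, Measure.restrict_univ,
    ← ofReal_integral_eq_lintegral_ofReal (integrable_of_integral_eq_one hφint)
      (Eventually.of_forall hφnn), hφint, ENNReal.ofReal_one]

lemma isProbabilityMeasure_sampleMeasure (hφnn : ∀ x, 0 ≤ φ x) (hφint : ∫ x, φ x = 1) (n : ℕ) :
    IsProbabilityMeasure (sampleMeasure n φ) := by
  have := isProbabilityMeasure_pdfMeasure hφnn hφint
  unfold sampleMeasure
  infer_instance

lemma pdfMeasure_real_Ioi (hφnn : ∀ x, 0 ≤ φ x) (hφint : ∫ x, φ x = 1) (u : ℝ) :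
    (pdfMeasure φ).real (Ioi u) = Phibar φ u := by
  rw [pdfMeasure_real_apply hφnn (integrable_of_integral_eq_one hφint) measurableSet_Ioi]
  have h := integral_add_compl (measurableSet_Iic (a := u)) (integrable_of_integral_eq_one hφint)
  rw [compl_Iic, hφint] at h
  rw [Phibar, ← h, add_sub_cancel_left]

lemma pdfMeasure_real_Iio_neg (hφnn : ∀ x, 0 ≤ φ x) (hφint : ∫ x, φ x = 1)
    (hφeven : ∀ x, φ (-x) = φ x) (u : ℝ) : (pdfMeasure φ).real (Iio (-u)) = Phibar φ u := by
  rw [← pdfMeasure_real_Ioi hφnn hφint,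
    pdfMeasure_real_apply hφnn (integrable_of_integral_eq_one hφint) measurableSet_Iio,
    pdfMeasure_real_apply hφnn (integrable_of_integral_eq_one hφint) measurableSet_Ioi,
    ← integral_Iic_eq_integral_Iio, ← integral_comp_neg_Ioi]
  simp only [hφeven]

end Density

section OrderStatistics

variable {n : ℕ} (ω : Fin n → ℝ)

lemma oStat_mono {a b : ℕ} (ha : 1 ≤ a) (hab : a ≤ b) (hb : b ≤ n) : oStat a ω ≤ oStat b ω := by
  rw [oStat, oStat, dif_pos ⟨ha, hab.trans hb⟩, dif_pos ⟨ha.trans hab, hb⟩]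
  exact Tuple.monotone_sort ω (Fin.mk_le_mk.mpr (by omega))

lemma spacing_nonneg {k : ℕ} (hk : 1 ≤ k) (h2k : 2 * k ≤ n) : 0 ≤ spacing k ω :=
  sub_nonneg.mpr (oStat_mono ω hk (by omega) (by omega))

lemma le_card_filter_Ioi_of_lt_oStat {k : ℕ} (hk : 1 ≤ k) (hkn : k ≤ n) {s : ℝ}
    (h : s < oStat (n - k + 1) ω) : k ≤ #(Finset.univ.filter fun i => ω i ∈ Ioi s) := by
  rw [oStat, dif_pos (by omega)] at h
  let top : Finset (Fin n) := Finset.Ici ⟨n - k, by omega⟩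
  have hsub : top.image (Tuple.sort ω) ⊆ Finset.univ.filter fun i => ω i ∈ Ioi s := by
    simp only [Finset.image_subset_iff, Finset.mem_filter, Finset.mem_univ, true_and]
    intro i hi
    exact h.trans_le (Tuple.monotone_sort ω (by simpa [top] using hi))
  calc k = #top := by simp only [top, Fin.card_Ici]; omega
    _ = #(top.image (Tuple.sort ω)) := (Finset.card_image_of_injective _ (Equiv.injective _)).symm
    _ ≤ _ := Finset.card_le_card hsub

lemma le_card_filter_Iio_of_oStat_lt {k : ℕ} (hk : 1 ≤ k) (hkn : k ≤ n) {s : ℝ}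
    (h : oStat k ω < s) : k ≤ #(Finset.univ.filter fun i => ω i ∈ Iio s) := by
  rw [oStat, dif_pos ⟨hk, hkn⟩] at h
  let bottom : Finset (Fin n) := Finset.Iic ⟨k - 1, by omega⟩
  have hsub : bottom.image (Tuple.sort ω) ⊆ Finset.univ.filter fun i => ω i ∈ Iio s := by
    simp only [Finset.image_subset_iff, Finset.mem_filter, Finset.mem_univ, true_and]
    intro i hi
    exact (Tuple.monotone_sort ω (by simpa [bottom] using hi)).trans_lt h
  calc k = #bottom := by simp only [bottom, Fin.card_Iic]; omega
    _ = #(bottom.image (Tuple.sort ω)) :=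
        (Finset.card_image_of_injective _ (Equiv.injective _)).symm
    _ ≤ _ := Finset.card_le_card hsub

lemma setOf_lt_spacing_subset {k : ℕ} (hk : 1 ≤ k) (hkn : k ≤ n) (t : ℝ) :
    {ω : Fin n → ℝ | spacing k ω > t} ⊆
      {ω | k ≤ #(Finset.univ.filter fun i => ω i ∈ Ioi (t / 2))} ∪
        {ω | k ≤ #(Finset.univ.filter fun i => ω i ∈ Iio (-(t / 2)))} := by
  intro ω (hω : t < oStat (n - k + 1) ω - oStat k ω)
  by_cases hupper : t / 2 < oStat (n - k + 1) ω
  · exact Or.inl (le_card_filter_Ioi_of_lt_oStat ω hk hkn hupper)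
  · exact Or.inr (le_card_filter_Iio_of_oStat_lt ω hk hkn (by linarith))

end OrderStatistics

lemma spacingQuantile_le {n k : ℕ} {φ : ℝ → ℝ} (hφnn : ∀ x, 0 ≤ φ x) (hφint : ∫ x, φ x = 1)
    (hk : 1 ≤ k) (h2k : 2 * k ≤ n) {α t : ℝ} (hα : α < 1)
    (h : sampleMeasure n φ {ω | spacing k ω > t} ≤ ENNReal.ofReal α) :
    spacingQuantile n φ α k ≤ t := by
  have := isProbabilityMeasure_sampleMeasure hφnn hφint n
  refine csInf_le ⟨0, fun s hs => ?_⟩ h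
  by_contra! hs0
  change sampleMeasure n φ _ ≤ _ at hs
  have huniv : {ω : Fin n → ℝ | spacing k ω > s} = univ :=
    eq_univ_of_forall fun ω => hs0.trans_le (spacing_nonneg ω hk h2k)
  rw [huniv, measure_univ] at hs
  exact hs.not_gt (ENNReal.ofReal_lt_one.mpr hα)

theorem stmt11_general (n : ℕ) (φ : ℝ → ℝ) (hφnn : ∀ x, 0 ≤ φ x)
    (hφint : ∫ x, φ x = 1) (hφeven : ∀ x, φ (-x) = φ x)
    (α : ℝ) (hα : α ∈ Set.Ioo (0:ℝ) 1)
    (k : ℕ) (hkn : k ≤ n / 2)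
    (hklog : 2 * Real.log (4 / α) < (k : ℝ))
    (t : ℝ)
    (hteq : Phibar φ (t / 2)
      = ((k : ℝ) / (n : ℝ)) * (1 - Real.sqrt (2 * Real.log (4 / α) / (k : ℝ)))) :
    sampleMeasure n φ {ω | spacing k ω > t} ≤ ENNReal.ofReal α ∧
    spacingQuantile n φ α k ≤ t := by
  classical
  obtain ⟨hα0, hα1⟩ := hα
  have hL : 0 < Real.log (4 / α) := Real.log_pos (by rw [lt_div_iff₀ hα0]; linarith)
  have hk : 1 ≤ k := Nat.cast_pos.mp (show (0 : ℝ) < k by linarith)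
  have h2k : 2 * k ≤ n := by omega
  have := isProbabilityMeasure_pdfMeasure hφnn hφint
  have := isProbabilityMeasure_sampleMeasure hφnn hφint n
  have htail : ∀ (A : Set ℝ) [DecidablePred (· ∈ A)], MeasurableSet A →
      (pdfMeasure φ).real A = Phibar φ (t / 2) →
      (sampleMeasure n φ).real {ω | k ≤ #(Finset.univ.filter fun i => ω i ∈ A)} ≤ α / 4 := by
    intro A _ hA hAp
    have hn : (n : ℝ) ≠ 0 := Nat.cast_ne_zero.mpr (by omega)
    calc _ ≤ Real.exp (-Real.log (4 / α)) :=
          measureReal_le_card_filter_mem_le_exp_neg hA hL.le hklog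
            (by rw [Fintype.card_fin, hAp, hteq]; field_simp)
      _ = α / 4 := by rw [Real.exp_neg, Real.exp_log (by positivity), inv_div]
  have hlevel : sampleMeasure n φ {ω | spacing k ω > t} ≤ ENNReal.ofReal α := by
    rw [ENNReal.le_ofReal_iff_toReal_le (measure_ne_top _ _) hα0.le]
    calc _ ≤ _ := measureReal_mono (setOf_lt_spacing_subset hk (by omega) t)
      _ ≤ _ := measureReal_union_le _ _
      _ ≤ α / 4 + α / 4 := add_le_add
          (htail _ measurableSet_Ioi (pdfMeasure_real_Ioi hφnn hφint _))
          (htail _ measurableSet_Iio (pdfMeasure_real_Iio_neg hφnn hφint hφeven _))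
      _ ≤ α := by linarith
  exact ⟨hlevel, spacingQuantile_le hφnn hφint hk h2k hα1 hlevel⟩

/-- upper bound `q_{α,k} ≤ t_{α,k}` on the quantile of the spacing
`Y_{(n-k+1)} - Y_{(k)}` for an even continuous density. -/
theorem stmt11 (n : ℕ) (φ : ℝ → ℝ) (hφcont : Continuous φ) (hφnn : ∀ x, 0 ≤ φ x)
    (hφint : ∫ x, φ x = 1) (hφeven : ∀ x, φ (-x) = φ x)
    (α : ℝ) (hα : α ∈ Set.Ioo (0:ℝ) 1)
    (k : ℕ) (hk1 : 1 ≤ k) (hkn : k ≤ n / 2)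
    (hklog : 2 * Real.log (4 / α) < (k : ℝ))
    (t : ℝ)
    (hteq : Phibar φ (t / 2)
      = ((k : ℝ) / (n : ℝ)) * (1 - Real.sqrt (2 * Real.log (4 / α) / (k : ℝ)))) :
    sampleMeasure n φ {ω | spacing k ω > t} ≤ ENNReal.ofReal α ∧
    spacingQuantile n φ α k ≤ t :=
  stmt11_general n φ hφnn hφint hφeven α hα k hkn hklog t hteq
end
end

section
/- Let φ be an even probability density on ℝ with ∫_ℝ x⁴φ(x)dx ≤ B, let M > 0, ε ∈ (0,1), μ₁ < μ₂ with μ₂-μ₁ ≤ M, and let X₁ have density f(x) = (1-ε)φ(x-μ₁) + ε·φ(x-μ₂). Then, writing Z for a random variable with density φ, E_f[(X₁ - E_f[X₁])⁴] = E[Z⁴] + 6ε(1-ε)(μ₂-μ₁)²·E[Z²] + [ε(1-ε)⁴ + ε⁴(1-ε)]·(μ₂-μ₁)⁴, and this quantity is at most B + (3/2)·√B·M² + M⁴ ≤ (M² + √B)². -/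
open MeasureTheory Filter Set

noncomputable section

lemma myMomInt (φ : ℝ → ℝ) (hφmeas : Measurable φ) (hφnn : ∀ x, 0 ≤ φ x)
    (hφI : Integrable φ) (hφ4 : Integrable (fun x => x ^ 4 * φ x))
    (k : ℕ) (hk : k ≤ 4) : Integrable (fun x => x ^ k * φ x) := by
  refine (hφI.add hφ4).mono' ((measurable_id.pow_const k).mul hφmeas).aestronglyMeasurable ?_
  filter_upwards with x
  have h4 : (0:ℝ) ≤ x ^ 4 := by positivity
  have hak : |x| ^ k ≤ 1 + x ^ 4 := by
    rcases le_total (|x|) 1 with h | h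
    · have := pow_le_one₀ (abs_nonneg x) h (n := k)
      nlinarith
    · have h2 : |x| ^ k ≤ |x| ^ 4 := pow_le_pow_right₀ h hk
      have h3 : |x| ^ 4 = x ^ 4 := by rw [← abs_pow, abs_of_nonneg h4]
      nlinarith
  calc |x ^ k * φ x| = |x| ^ k * φ x := by
        rw [abs_mul, abs_pow, abs_of_nonneg (hφnn x)]
    _ ≤ (1 + x ^ 4) * φ x := mul_le_mul_of_nonneg_right hak (hφnn x)
    _ = φ x + x ^ 4 * φ x := by ring

lemma myShiftInt (φ : ℝ → ℝ) (hφmeas : Measurable φ) (hφnn : ∀ x, 0 ≤ φ x)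
    (hφI : Integrable φ) (hφ4 : Integrable (fun x => x ^ 4 * φ x))
    (c : ℝ) : Integrable (fun x => (x + c) ^ 4 * φ x) := by
  have hb : Integrable (fun x => 8 * c ^ 4 * φ x + 8 * (x ^ 4 * φ x)) :=
    (hφI.const_mul _).add (hφ4.const_mul _)
  refine hb.mono' ?_ ?_
  · exact (((measurable_id.add_const c).pow_const 4).mul hφmeas).aestronglyMeasurable
  · filter_upwards with x
    have h1 : (x + c) ^ 4 ≤ 8 * x ^ 4 + 8 * c ^ 4 := by
      nlinarith [sq_nonneg (x - c), sq_nonneg (x + c), sq_nonneg (x ^ 2 - c ^ 2),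
        sq_nonneg (x * c), sq_nonneg x, sq_nonneg c]
    have h0 : (0:ℝ) ≤ (x + c) ^ 4 := by positivity
    calc |(x + c) ^ 4 * φ x| = (x + c) ^ 4 * φ x := by
          rw [abs_mul, abs_of_nonneg h0, abs_of_nonneg (hφnn x)]
      _ ≤ (8 * x ^ 4 + 8 * c ^ 4) * φ x := mul_le_mul_of_nonneg_right h1 (hφnn x)
      _ = 8 * c ^ 4 * φ x + 8 * (x ^ 4 * φ x) := by ring

lemma myOddMom (φ : ℝ → ℝ) (hφeven : ∀ x, φ (-x) = φ x)
    (k : ℕ) (hk : Odd k) : ∫ x, x ^ k * φ x = 0 := by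
  have h : ∫ x, -(x ^ k * φ x) = ∫ x, x ^ k * φ x := by
    rw [← integral_neg_eq_self (fun x => x ^ k * φ x) volume]
    congr 1; funext x
    rw [hφeven, hk.neg_pow]; ring
  rw [integral_neg] at h
  linarith

lemma myExpand4 (φ : ℝ → ℝ) (hφmeas : Measurable φ) (hφnn : ∀ x, 0 ≤ φ x)
    (hφint : ∫ x, φ x = 1) (hφeven : ∀ x, φ (-x) = φ x)
    (hφI : Integrable φ) (hφ4 : Integrable (fun x => x ^ 4 * φ x))
    (c : ℝ) :
    ∫ x, (x + c) ^ 4 * φ x =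
      (∫ x, x ^ 4 * φ x) + 6 * c ^ 2 * (∫ x, x ^ 2 * φ x) + c ^ 4 := by
  have I1 := myMomInt φ hφmeas hφnn hφI hφ4 1 (by norm_num)
  have I2 := myMomInt φ hφmeas hφnn hφI hφ4 2 (by norm_num)
  have I3 := myMomInt φ hφmeas hφnn hφI hφ4 3 (by norm_num)
  have heq : (fun x => (x + c) ^ 4 * φ x) = fun x =>
      x ^ 4 * φ x + ((4 * c) * (x ^ 3 * φ x) + ((6 * c ^ 2) * (x ^ 2 * φ x) +
      ((4 * c ^ 3) * (x ^ 1 * φ x) + c ^ 4 * φ x))) := by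
    funext x; ring
  have J1 : Integrable (fun x => (4 * c ^ 3) * (x ^ 1 * φ x) + c ^ 4 * φ x) volume :=
    (I1.const_mul _).add (hφI.const_mul _)
  have J2 : Integrable (fun x => (6 * c ^ 2) * (x ^ 2 * φ x) +
      ((4 * c ^ 3) * (x ^ 1 * φ x) + c ^ 4 * φ x)) volume := (I2.const_mul _).add J1
  have J3 : Integrable (fun x => (4 * c) * (x ^ 3 * φ x) + ((6 * c ^ 2) * (x ^ 2 * φ x) +
      ((4 * c ^ 3) * (x ^ 1 * φ x) + c ^ 4 * φ x))) volume := (I3.const_mul _).add J2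
  rw [heq, integral_add hφ4 J3, integral_add (I3.const_mul _) J2,
    integral_add (I2.const_mul _) J1, integral_add (I1.const_mul _) (hφI.const_mul _),
    integral_const_mul, integral_const_mul, integral_const_mul, integral_const_mul,
    myOddMom φ hφeven 3 (by decide), myOddMom φ hφeven 1 (by decide), hφint]
  ring

lemma myArith1 (A2 A4 B M ε d : ℝ) (hA2nn : 0 ≤ A2)
    (hA4B : A4 ≤ B) (hA2B : A2 ≤ Real.sqrt B) (hε0 : 0 < ε) (hε1 : ε < 1)
    (hd0 : 0 ≤ d) (hdM : d ≤ M) :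
    A4 + 6 * ε * (1 - ε) * d ^ 2 * A2 + (ε * (1 - ε) ^ 4 + ε ^ 4 * (1 - ε)) * d ^ 4
      ≤ B + (3 / 2) * Real.sqrt B * M ^ 2 + M ^ 4 := by
  have hsq : (0:ℝ) ≤ Real.sqrt B := Real.sqrt_nonneg B
  have t2 : 6 * ε * (1 - ε) * d ^ 2 * A2 ≤ (3 / 2) * Real.sqrt B * M ^ 2 := by
    have he : 6 * ε * (1 - ε) ≤ 3 / 2 := by nlinarith [sq_nonneg (2 * ε - 1)]
    have hd2 : d ^ 2 ≤ M ^ 2 := by nlinarith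
    calc 6 * ε * (1 - ε) * d ^ 2 * A2 ≤ (3 / 2) * d ^ 2 * A2 := by
          apply mul_le_mul_of_nonneg_right _ hA2nn
          apply mul_le_mul_of_nonneg_right he (sq_nonneg _)
      _ ≤ (3 / 2) * M ^ 2 * A2 := by nlinarith
      _ ≤ (3 / 2) * M ^ 2 * Real.sqrt B := by
          apply mul_le_mul_of_nonneg_left hA2B; positivity
      _ = (3 / 2) * Real.sqrt B * M ^ 2 := by ring
  have t3 : (ε * (1 - ε) ^ 4 + ε ^ 4 * (1 - ε)) * d ^ 4 ≤ M ^ 4 := by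
    have hu0 : (0:ℝ) ≤ 1 - ε := by linarith
    have hp1 : (1 - ε) ^ 4 ≤ 1 := pow_le_one₀ hu0 (by linarith)
    have hp2 : ε ^ 4 ≤ 1 := pow_le_one₀ hε0.le hε1.le
    have hc : ε * (1 - ε) ^ 4 + ε ^ 4 * (1 - ε) ≤ 1 := by
      have q1 : ε * (1 - ε) ^ 4 ≤ ε * 1 := mul_le_mul_of_nonneg_left hp1 hε0.le
      have q2 : ε ^ 4 * (1 - ε) ≤ 1 * (1 - ε) := mul_le_mul_of_nonneg_right hp2 hu0
      linarith
    have hd4 : d ^ 4 ≤ M ^ 4 := pow_le_pow_left₀ hd0 hdM 4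
    have hd4nn : (0:ℝ) ≤ d ^ 4 := by positivity
    nlinarith
  linarith

lemma myArith2 (B M : ℝ) (hBnn : 0 ≤ B) :
    B + (3 / 2) * Real.sqrt B * M ^ 2 + M ^ 4 ≤ (M ^ 2 + Real.sqrt B) ^ 2 := by
  nlinarith [Real.sq_sqrt hBnn, mul_nonneg (Real.sqrt_nonneg B) (sq_nonneg M)]


/-- fourth central moment of a two-component location mixture of an
even density, and its bound. -/
theorem stmt16 (φ : ℝ → ℝ) (hφmeas : Measurable φ) (hφnn : ∀ x, 0 ≤ φ x)
    (hφint : ∫ x, φ x = 1) (hφeven : ∀ x, φ (-x) = φ x)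
    (B : ℝ) (hφ4 : Integrable (fun x => x ^ 4 * φ x))
    (hφ4B : ∫ x, x ^ 4 * φ x ≤ B)
    (M ε μ₁ μ₂ : ℝ) (hM : 0 < M) (hε : ε ∈ Set.Ioo (0:ℝ) 1)
    (hμ : μ₁ < μ₂) (hμM : μ₂ - μ₁ ≤ M) :
    (∫ x, (x - ((1 - ε) * μ₁ + ε * μ₂)) ^ 4 *
          ((1 - ε) * φ (x - μ₁) + ε * φ (x - μ₂))
        = (∫ x, x ^ 4 * φ x) +
            6 * ε * (1 - ε) * (μ₂ - μ₁) ^ 2 * (∫ x, x ^ 2 * φ x) +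
            (ε * (1 - ε) ^ 4 + ε ^ 4 * (1 - ε)) * (μ₂ - μ₁) ^ 4) ∧
    (∫ x, (x - ((1 - ε) * μ₁ + ε * μ₂)) ^ 4 *
          ((1 - ε) * φ (x - μ₁) + ε * φ (x - μ₂))
        ≤ B + (3 / 2) * Real.sqrt B * M ^ 2 + M ^ 4) ∧
    B + (3 / 2) * Real.sqrt B * M ^ 2 + M ^ 4 ≤ (M ^ 2 + Real.sqrt B) ^ 2 := by
  obtain ⟨hε0, hε1⟩ := hε
  have hφI : Integrable φ := by
    by_contra h
    rw [integral_undef h] at hφint; norm_num at hφint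
  set m := (1 - ε) * μ₁ + ε * μ₂ with hm
  have hd0 : (0:ℝ) ≤ μ₂ - μ₁ := by linarith
  have hshift : ∀ μ : ℝ, ∫ x, (x - m) ^ 4 * φ (x - μ)
      = ∫ y, (y + (μ - m)) ^ 4 * φ y := by
    intro μ
    rw [← integral_sub_right_eq_self (fun y => (y + (μ - m)) ^ 4 * φ y) μ]
    congr 1; funext x; ring_nf
  have h1 : ∫ x, (x - m) ^ 4 * φ (x - μ₁)
      = (∫ x, x ^ 4 * φ x) + 6 * (μ₁ - m) ^ 2 * (∫ x, x ^ 2 * φ x) + (μ₁ - m) ^ 4 := by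
    rw [hshift μ₁, myExpand4 φ hφmeas hφnn hφint hφeven hφI hφ4]
  have h2 : ∫ x, (x - m) ^ 4 * φ (x - μ₂)
      = (∫ x, x ^ 4 * φ x) + 6 * (μ₂ - m) ^ 2 * (∫ x, x ^ 2 * φ x) + (μ₂ - m) ^ 4 := by
    rw [hshift μ₂, myExpand4 φ hφmeas hφnn hφint hφeven hφI hφ4]
  have hc1 : μ₁ - m = -(ε * (μ₂ - μ₁)) := by rw [hm]; ring
  have hc2 : μ₂ - m = (1 - ε) * (μ₂ - μ₁) := by rw [hm]; ring
  have hIsh : ∀ μ : ℝ, Integrable (fun x => (x - m) ^ 4 * φ (x - μ)) := by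
    intro μ
    have h := (myShiftInt φ hφmeas hφnn hφI hφ4 (μ - m)).comp_sub_right μ
    have heq : (fun x => (x - m) ^ 4 * φ (x - μ))
        = fun x => ((x - μ) + (μ - m)) ^ 4 * φ (x - μ) := by funext x; ring_nf
    rw [heq]; exact h
  have hsplit : ∫ x, (x - m) ^ 4 * ((1 - ε) * φ (x - μ₁) + ε * φ (x - μ₂))
      = (1 - ε) * (∫ x, (x - m) ^ 4 * φ (x - μ₁)) + ε * (∫ x, (x - m) ^ 4 * φ (x - μ₂)) := by
    have heq : (fun x => (x - m) ^ 4 * ((1 - ε) * φ (x - μ₁) + ε * φ (x - μ₂)))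
        = fun x => (1 - ε) * ((x - m) ^ 4 * φ (x - μ₁)) + ε * ((x - m) ^ 4 * φ (x - μ₂)) := by
      funext x; ring
    rw [heq, integral_add ((hIsh μ₁).const_mul _) ((hIsh μ₂).const_mul _),
      integral_const_mul, integral_const_mul]
  have hfirst : ∫ x, (x - m) ^ 4 * ((1 - ε) * φ (x - μ₁) + ε * φ (x - μ₂))
      = (∫ x, x ^ 4 * φ x) +
          6 * ε * (1 - ε) * (μ₂ - μ₁) ^ 2 * (∫ x, x ^ 2 * φ x) +
          (ε * (1 - ε) ^ 4 + ε ^ 4 * (1 - ε)) * (μ₂ - μ₁) ^ 4 := by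
    rw [hsplit, h1, h2, hc1, hc2]; ring
  have hA4nn : (0:ℝ) ≤ ∫ x, x ^ 4 * φ x :=
    integral_nonneg fun x => mul_nonneg (by positivity) (hφnn x)
  have hA2nn : (0:ℝ) ≤ ∫ x, x ^ 2 * φ x :=
    integral_nonneg fun x => mul_nonneg (by positivity) (hφnn x)
  have hBnn : (0:ℝ) ≤ B := le_trans hA4nn hφ4B
  have hsq : (0:ℝ) ≤ Real.sqrt B := Real.sqrt_nonneg B
  have hCS : (∫ x, x ^ 2 * φ x) ^ 2 ≤ ∫ x, x ^ 4 * φ x := by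
    have I2 := myMomInt φ hφmeas hφnn hφI hφ4 2 (by norm_num)
    have hnn : (0:ℝ) ≤ ∫ x, (x ^ 2 - (∫ y, y ^ 2 * φ y)) ^ 2 * φ x :=
      integral_nonneg fun x => mul_nonneg (sq_nonneg _) (hφnn x)
    have heq : (fun x => (x ^ 2 - (∫ y, y ^ 2 * φ y)) ^ 2 * φ x)
        = fun x => x ^ 4 * φ x + ((-(2 * (∫ y, y ^ 2 * φ y))) * (x ^ 2 * φ x)
            + ((∫ y, y ^ 2 * φ y) ^ 2) * φ x) := by
      funext x; ring
    have J : Integrable (fun x => (-(2 * (∫ y, y ^ 2 * φ y))) * (x ^ 2 * φ x)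
        + ((∫ y, y ^ 2 * φ y) ^ 2) * φ x) := (I2.const_mul _).add (hφI.const_mul _)
    rw [heq, integral_add hφ4 J, integral_add (I2.const_mul _) (hφI.const_mul _),
      integral_const_mul, integral_const_mul, hφint] at hnn
    nlinarith [hnn]
  have hA2B : (∫ x, x ^ 2 * φ x) ≤ Real.sqrt B := by
    calc (∫ x, x ^ 2 * φ x) = Real.sqrt ((∫ x, x ^ 2 * φ x) ^ 2) :=
          (Real.sqrt_sq hA2nn).symm
      _ ≤ Real.sqrt B := Real.sqrt_le_sqrt (le_trans hCS hφ4B)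
  refine ⟨hfirst, ?_, ?_⟩
  · rw [hfirst]
    exact myArith1 _ _ B M ε _ hA2nn hφ4B hA2B hε0 hε1 hd0 hμM
  · exact myArith2 B M hBnn
end
end
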